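/- For any graphs G and H, ϑ⁻(G ⊠ H) ≤ ϑ⁻(G) · ϑ⁺(H). -/

import Mathlib

open Finset

namespace SimpleGraph

variable {V W : Type*}

/-- The strong graph product. -/
def strongProd (G : SimpleGraph V) (H : SimpleGraph W) : SimpleGraph (V × W) where
  Adj x y := x ≠ y ∧ (x.1 = y.1 ∨ G.Adj x.1 y.1) ∧ (x.2 = y.2 ∨ H.Adj x.2 y.2)
  symm := by
    constructor
    rintro x y ⟨hne, h1, h2⟩
    exact ⟨hne.symm, h1.imp Eq.symm (fun h => G.adj_symm h), h2.imp Eq.symm (fun h => H.adj_symm h)⟩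
  loopless := by constructor; rintro x ⟨hne, -, -⟩; exact hne rfl

/-- The disjunctive graph product. -/
def disjProd (G : SimpleGraph V) (H : SimpleGraph W) : SimpleGraph (V × W) where
  Adj x y := G.Adj x.1 y.1 ∨ H.Adj x.2 y.2
  symm := ⟨fun _ _ h => Or.imp (fun h => G.adj_symm h) (fun h => H.adj_symm h) h⟩
  loopless := ⟨fun x h => Or.elim h (G.loopless.irrefl x.1) (H.loopless.irrefl x.2)⟩

/-- A finite set of vertices is independent if no two of its members are adjacent. -/
def IsIndep (G : SimpleGraph V) (s : Finset V) : Prop :=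
  ∀ ⦃v⦄, v ∈ s → ∀ ⦃w⦄, w ∈ s → ¬ G.Adj v w

/-- The independence number. -/
noncomputable def alpha (G : SimpleGraph V) [Fintype V] : ℕ :=
  sSup {n | ∃ s : Finset V, G.IsIndep s ∧ s.card = n}

/-- The fractional packing number. -/
noncomputable def alphaStar (G : SimpleGraph V) [Fintype V] : ℝ :=
  sSup {x | ∃ t : V → ℝ, (∀ v, 0 ≤ t v) ∧
    (∀ C : Finset V, G.IsClique (C : Set V) → ∑ v ∈ C, t v ≤ 1) ∧ x = ∑ v, t v}

/-- The Lovász number. -/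
noncomputable def lovTheta (G : SimpleGraph V) [Fintype V] : ℝ :=
  sSup {x | ∃ B : Matrix V V ℝ, B.PosSemidef ∧ B.trace = 1 ∧
    (∀ v w, G.Adj v w → B v w = 0) ∧ x = ∑ v, ∑ w, B v w}

/-- Schrijver's variant of the Lovász number. -/
noncomputable def thetaMinus (G : SimpleGraph V) [Fintype V] : ℝ :=
  sSup {x | ∃ B : Matrix V V ℝ, B.PosSemidef ∧ B.trace = 1 ∧ (∀ v w, 0 ≤ B v w) ∧
    (∀ v w, G.Adj v w → B v w = 0) ∧ x = ∑ v, ∑ w, B v w}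

/-- Szegedy's variant of the Lovász number. -/
noncomputable def thetaPlus (G : SimpleGraph V) [Fintype V] : ℝ :=
  sSup {x | ∃ B : Matrix V V ℝ, B.PosSemidef ∧ B.trace = 1 ∧
    (∀ v w, G.Adj v w → B v w ≤ 0) ∧ x = ∑ v, ∑ w, B v w}

/-- The clique covering number. -/
noncomputable def cliqueCoverNum (G : SimpleGraph V) [Fintype V] : ℕ :=
  sInf {n | ∃ C : Fin n → Finset V, (∀ i, G.IsClique (C i : Set V)) ∧ ∀ v, ∃ i, v ∈ C i}

/-- The blow-up of a graph along integer vertex weights. -/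
def blup (G : SimpleGraph V) (p : V → ℕ) : SimpleGraph (Σ v, Fin (p v)) where
  Adj x y := G.Adj x.1 y.1
  symm := ⟨fun _ _ h => G.adj_symm h⟩
  loopless := ⟨fun x h => G.loopless.irrefl x.1 h⟩

/-- The weighted independence number (integer weights). -/
noncomputable def alphaWNat (G : SimpleGraph V) [Fintype V] (p : V → ℕ) : ℕ :=
  sSup {n | ∃ s : Finset V, G.IsIndep s ∧ n = ∑ v ∈ s, p v}

/-- The weighted independence number (real weights). -/
noncomputable def alphaW (G : SimpleGraph V) [Fintype V] (p : V → ℝ) : ℝ :=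
  sSup {x | ∃ s : Finset V, G.IsIndep s ∧ x = ∑ v ∈ s, p v}

end SimpleGraph

open SimpleGraph
open scoped RealInnerProductSpace

/-!
By Hahn–Banach separation from the positive semidefinite cone, every `l > ϑ⁻(G)` is the value of
a dual matrix `Z` (`Z - J ⪰ 0`, `Z_vv ≤ l`, `Z_vw ≤ 0` off the edges of `G`): otherwise the
separating functional, symmetrised and normalised, would be a primal point of value `> ϑ⁻(G)`.
Contracting the `V`-indices of a primal matrix `B` of `G ⊠ H` against `Z` gives a positive
semidefinite `A` on `W` with `A_ww' ≤ 0` on the edges of `H`, `tr A ≤ l`, and `∑ A ≥ ∑ B`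
because `Z - J ⪰ 0`. Hence `∑ B ≤ ϑ⁺(H) · tr A ≤ l · ϑ⁺(H)`.
-/

lemma nonpos_of_forall_add_mul_neg {a b : ℝ} (h : ∀ c : ℝ, 0 ≤ c → a + c * b < 0) : b ≤ 0 := by
  by_contra! hb
  have ha : a < 0 := by simpa using h 0 le_rfl
  have := h (-a / b) (div_nonneg (by linarith) hb.le)
  rw [div_mul_cancel₀ _ hb.ne'] at this
  linarith

lemma le_mul_of_forall_lt_imp_le_mul {x a b : ℝ} (h : ∀ l, a < l → x ≤ l * b) : x ≤ a * b :=
  ge_of_tendsto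
    (((continuous_mul_const b).tendsto a).mono_left (nhdsWithin_le_nhds (s := Set.Ioi a)))
    (eventually_nhdsWithin_of_forall h)

namespace Matrix

variable {n m : Type*} [Fintype n] {A B : Matrix n n ℝ}

omit [Fintype n] in
lemma PosSemidef.apply_symm (hB : B.PosSemidef) (v w : n) : B w v = B v w := by
  simpa using hB.isHermitian.apply v w

lemma PosSemidef.two_mul_apply_le (hB : B.PosSemidef) (v w : n) :
    2 * B v w ≤ B v v + B w w := by
  classical
  have h := hB.dotProduct_mulVec_nonneg (Pi.single v 1 - Pi.single w 1)
  simp only [star_trivial, mulVec_sub, mulVec_single, MulOpposite.op_one, one_smul, dotProduct_sub,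
    sub_dotProduct, single_dotProduct, col_apply, one_mul, hB.apply_symm v w] at h
  linarith

lemma PosSemidef.sum_le_card_mul_trace (hB : B.PosSemidef) :
    ∑ v, ∑ w, B v w ≤ Fintype.card n * B.trace := by
  have h : ∑ v, ∑ w, 2 * B v w ≤ ∑ v : n, ∑ w : n, (B v v + B w w) :=
    sum_le_sum fun v _ => sum_le_sum fun w _ => hB.two_mul_apply_le v w
  simp only [← mul_sum, sum_add_distrib, sum_const, card_univ, nsmul_eq_mul] at h
  simp only [trace, diag_apply]
  linarith

lemma PosSemidef.sum_nonneg (hB : B.PosSemidef) : 0 ≤ ∑ v, ∑ w, B v w := by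
  simpa [dotProduct, mulVec, mul_sum] using hB.dotProduct_mulVec_nonneg 1

lemma PosSemidef.sum_mul_nonneg (hA : A.PosSemidef) (hB : B.PosSemidef) :
    0 ≤ ∑ v, ∑ w, A v w * B v w :=
  (hA.hadamard hB).sum_nonneg

lemma dotProduct_mulVec_eq_sum_vecMulVec_mul (x : n → ℝ) :
    x ⬝ᵥ (B *ᵥ x) = ∑ v, ∑ w, vecMulVec x x v w * B v w := by
  simp only [dotProduct, mulVec, mul_sum, vecMulVec_apply]
  exact sum_congr rfl fun v _ => sum_congr rfl fun w _ => by ring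

lemma posSemidef_add_transpose_of_sum_mul_nonneg {F : Matrix n n ℝ}
    (hF : ∀ M : Matrix n n ℝ, M.PosSemidef → 0 ≤ ∑ v, ∑ w, M v w * F v w) :
    (F + Fᵀ).PosSemidef := by
  refine .of_dotProduct_mulVec_nonneg ?_ fun x => ?_
  · simp [IsHermitian, conjTranspose_eq_transpose_of_trivial, add_comm]
  · have hx := hF _ (posSemidef_vecMulVec_self_star x)
    rw [star_trivial, ← dotProduct_mulVec_eq_sum_vecMulVec_mul] at hx
    rw [star_trivial, add_mulVec, dotProduct_add, dotProduct_mulVec x Fᵀ, vecMul_transpose,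
      dotProduct_comm (F *ᵥ x)]
    linarith

lemma posSemidef_of_one : (of 1 : Matrix n n ℝ).PosSemidef := by
  convert posSemidef_vecMulVec_self_star (1 : n → ℝ)
  ext
  simp [vecMulVec_apply]

omit [Fintype n] in
lemma convex_setOf_posSemidef : Convex ℝ {A : Matrix n n ℝ | A.PosSemidef} :=
  fun _ hA _ hB _ _ ha hb _ => (hA.smul ha).add (hB.smul hb)

lemma eq_sum_mul_single [DecidableEq n] {L : Type*} [FunLike L (Matrix n n ℝ) ℝ]
    [LinearMapClass L ℝ (Matrix n n ℝ) ℝ] (f : L) (X : Matrix n n ℝ) :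
    f X = ∑ v, ∑ w, X v w * f (single v w 1) := by
  conv_lhs => rw [matrix_eq_sum_single X]
  simp only [map_sum]
  refine sum_congr rfl fun v _ => sum_congr rfl fun w _ => ?_
  rw [← smul_eq_mul, ← map_smul, smul_single, smul_eq_mul, mul_one]

lemma exists_sum_mul_neg_of_disjoint_posSemidef [DecidableEq n] {s : Set (Matrix n n ℝ)}
    (hconv : Convex ℝ s) (hopen : IsOpen s) (hdisj : ∀ N ∈ s, ¬N.PosSemidef) :
    ∃ F : Matrix n n ℝ, (∀ N ∈ s, ∑ v, ∑ w, N v w * F v w < 0) ∧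
      ∀ M : Matrix n n ℝ, M.PosSemidef → 0 ≤ ∑ v, ∑ w, M v w * F v w := by
  obtain ⟨f, u, hfs, hft⟩ := geometric_hahn_banach_open hconv hopen convex_setOf_posSemidef
    (Set.disjoint_left.mpr hdisj)
  have hu : u ≤ 0 := by simpa using hft 0 PosSemidef.zero
  have hpsd : ∀ M : Matrix n n ℝ, M.PosSemidef → 0 ≤ f M := by
    intro M hM
    by_contra! hneg
    have := hft (((u - 1) / f M) • M) (hM.smul (div_nonneg_of_nonpos (by linarith) hneg.le))
    rw [map_smul, smul_eq_mul, div_mul_cancel₀ _ hneg.ne] at this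
    linarith
  refine ⟨of fun v w => f (single v w 1), fun N hN => ?_, fun M hM => ?_⟩ <;>
    simp only [of_apply, ← eq_sum_mul_single f]
  · exact (hfs N hN).trans_le hu
  · exact hpsd M hM

lemma sum_add_single_mul [DecidableEq n] (N F : Matrix n n ℝ) (v w : n) (a : ℝ) :
    ∑ i, ∑ j, (N + single v w a) i j * F i j = ∑ i, ∑ j, N i j * F i j + a * F v w := by
  simp [add_mul, sum_add_distrib, single_apply, ite_and]

lemma mul_apply_nonpos_of_forall_add_single_mem [DecidableEq n] {s : Set (Matrix n n ℝ)}
    {F N : Matrix n n ℝ} (hF : ∀ N ∈ s, ∑ i, ∑ j, N i j * F i j < 0) {v w : n} {r : ℝ}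
    (hray : ∀ c : ℝ, 0 ≤ c → N + single v w (c * r) ∈ s) : r * F v w ≤ 0 :=
  nonpos_of_forall_add_mul_neg fun c hc => by
    simpa only [sum_add_single_mul, mul_assoc] using hF _ (hray c hc)

noncomputable def sdpSup (P : Matrix n n ℝ → Prop) : ℝ :=
  sSup {x | ∃ B : Matrix n n ℝ, B.PosSemidef ∧ B.trace = 1 ∧ P B ∧ x = ∑ v, ∑ w, B v w}

variable {P : Matrix n n ℝ → Prop}

lemma sdpSup_nonneg : 0 ≤ sdpSup P :=
  Real.sSup_nonneg <| by rintro _ ⟨B, hB, -, -, rfl⟩; exact hB.sum_nonneg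

lemma sdpSup_le {a : ℝ} (ha : 0 ≤ a)
    (h : ∀ B : Matrix n n ℝ, B.PosSemidef → B.trace = 1 → P B → ∑ v, ∑ w, B v w ≤ a) :
    sdpSup P ≤ a :=
  Real.sSup_le (by rintro _ ⟨B, hB, htr, hP, rfl⟩; exact h B hB htr hP) ha

lemma sum_le_sdpSup_mul_trace (hP : ∀ c : ℝ, 0 < c → ∀ B, P B → P (c • B))
    (hB : B.PosSemidef) (hPB : P B) : ∑ v, ∑ w, B v w ≤ sdpSup P * B.trace := by
  rcases hB.trace_nonneg.eq_or_lt with h0 | hpos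
  · obtain rfl := hB.trace_eq_zero_iff.mp h0.symm
    simp
  have hbdd : BddAbove {x | ∃ B : Matrix n n ℝ, B.PosSemidef ∧ B.trace = 1 ∧ P B ∧
      x = ∑ v, ∑ w, B v w} :=
    ⟨Fintype.card n, by rintro _ ⟨B, hB, htr, -, rfl⟩; simpa [htr] using hB.sum_le_card_mul_trace⟩
  have hle := le_csSup hbdd ⟨(B.trace)⁻¹ • B, hB.smul (inv_nonneg.2 hpos.le),
    by rw [trace_smul, smul_eq_mul, inv_mul_cancel₀ hpos.ne'], hP _ (inv_pos.2 hpos) B hPB, rfl⟩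
  simp only [smul_apply, smul_eq_mul, ← mul_sum] at hle
  rwa [inv_mul_le_iff₀ hpos, mul_comm] at hle

/-- The partial trace over `n` of `(Zᵀ ⊗ₖ 1) * B`. -/
def contractLeft (Z : Matrix n n ℝ) (B : Matrix (n × m) (n × m) ℝ) : Matrix m m ℝ :=
  of fun w w' => ∑ v, ∑ v', Z v v' * B (v, w) (v', w')

lemma contractLeft_apply (Z : Matrix n n ℝ) (B : Matrix (n × m) (n × m) ℝ) (w w' : m) :
    contractLeft Z B w w' = ∑ v, ∑ v', Z v v' * B (v, w) (v', w') := rfl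

lemma contractLeft_add (Z₁ Z₂ : Matrix n n ℝ) (B : Matrix (n × m) (n × m) ℝ) :
    contractLeft (Z₁ + Z₂) B = contractLeft Z₁ B + contractLeft Z₂ B := by
  ext w w'
  simp only [contractLeft_apply, add_apply, add_mul, sum_add_distrib]

variable [Fintype m]

lemma sum_sum_sum_sum_comm {β : Type*} [AddCommMonoid β] (f : n → m → n → m → β) :
    ∑ w, ∑ w', ∑ v, ∑ v', f v w v' w' = ∑ v, ∑ w, ∑ v', ∑ w', f v w v' w' :=
  calc ∑ w, ∑ w', ∑ v, ∑ v', f v w v' w' = ∑ w, ∑ v, ∑ w', ∑ v', f v w v' w' :=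
        sum_congr rfl fun _ _ => sum_comm
    _ = ∑ v, ∑ w, ∑ w', ∑ v', f v w v' w' := sum_comm
    _ = ∑ v, ∑ w, ∑ v', ∑ w', f v w v' w' :=
        sum_congr rfl fun _ _ => sum_congr rfl fun _ _ => sum_comm

lemma sum_contractLeft_of_one (B : Matrix (n × m) (n × m) ℝ) :
    ∑ w, ∑ w', contractLeft (of 1 : Matrix n n ℝ) B w w' = ∑ p, ∑ q, B p q := by
  simp only [contractLeft_apply, of_apply, Pi.one_apply, one_mul, Fintype.sum_prod_type]
  exact sum_sum_sum_sum_comm fun v w v' w' => B (v, w) (v', w')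

-- The quadratic form of `contractLeft Z B` at `x` is the pairing of `B` with `Z ⊗ₖ x xᵀ`.
lemma PosSemidef.contractLeft {Z : Matrix n n ℝ} {B : Matrix (n × m) (n × m) ℝ}
    (hZ : Z.PosSemidef) (hB : B.PosSemidef) : (contractLeft Z B).PosSemidef := by
  refine .of_dotProduct_mulVec_nonneg ?_ fun x => ?_
  · ext w w'
    simp only [conjTranspose_apply, star_trivial, contractLeft_apply]
    rw [sum_comm]
    exact sum_congr rfl fun v _ => sum_congr rfl fun v' _ => by
      rw [hZ.apply_symm, hB.apply_symm]
  · have hpair := (hZ.kronecker (posSemidef_vecMulVec_self_star x)).sum_mul_nonneg hB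
    simp only [kroneckerMap_apply, vecMulVec_apply, star_trivial, Fintype.sum_prod_type] at hpair
    simp only [dotProduct, mulVec, contractLeft_apply, star_trivial, mul_sum, sum_mul]
    rw [sum_sum_sum_sum_comm fun v w v' w' => x w * (Z v v' * B (v, w) (v', w') * x w')]
    refine hpair.trans_eq (sum_congr rfl fun v _ => sum_congr rfl fun w _ =>
      sum_congr rfl fun v' _ => sum_congr rfl fun w' _ => by ring)

lemma sum_le_sum_contractLeft {Z : Matrix n n ℝ} {B : Matrix (n × m) (n × m) ℝ}
    (hZ : (Z - of 1).PosSemidef) (hB : B.PosSemidef) :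
    ∑ p, ∑ q, B p q ≤ ∑ w, ∑ w', contractLeft Z B w w' := by
  have hsplit : Z = of 1 + (Z - of 1) := by abel
  rw [hsplit, contractLeft_add]
  simp only [add_apply, sum_add_distrib, sum_contractLeft_of_one]
  linarith [(hZ.contractLeft hB).sum_nonneg]

end Matrix

open Matrix

namespace SimpleGraph

variable {V W : Type*} {G : SimpleGraph V} {H : SimpleGraph W}

section StrictDual

variable (G) [DecidableEq V]

/-- The matrices `Z - J`, `J = of 1` the all-ones matrix, for the strictly feasible points `Z` of
the dual program of `thetaMinus` with objective value `l`. -/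
def strictDualSet (l : ℝ) : Set (Matrix V V ℝ) :=
  {N | ∀ v w, ¬G.Adj v w → N v w < (l • 1 - of 1 : Matrix V V ℝ) v w}

variable {G} in
lemma mem_strictDualSet_of_le {l : ℝ} {N N' : Matrix V V ℝ} (hN : N ∈ G.strictDualSet l)
    (hle : ∀ v w, ¬G.Adj v w → N' v w ≤ N v w) : N' ∈ G.strictDualSet l :=
  fun v w h => (hle v w h).trans_lt (hN v w h)

lemma isOpen_strictDualSet [Finite V] (l : ℝ) : IsOpen (G.strictDualSet l) := by
  simp only [strictDualSet, Set.ofPred_forall]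
  exact isOpen_iInter_of_finite fun v => isOpen_iInter_of_finite fun w =>
    isOpen_iInter_of_finite fun _ => isOpen_lt (by fun_prop) continuous_const

lemma convex_strictDualSet (l : ℝ) : Convex ℝ (G.strictDualSet l) := by
  simp only [strictDualSet, Set.ofPred_forall]
  exact convex_iInter fun v => convex_iInter fun w => convex_iInter fun _ =>
    convex_halfSpace_lt ⟨fun _ _ => rfl, fun _ _ => rfl⟩ _

variable {G}

lemma smul_sub_mem_strictDualSet {θ l : ℝ} (hθ : -1 < θ) (hl : θ < l) :
    ((l + 1) / (θ + 1)) • (θ • 1 - of 1 : Matrix V V ℝ) ∈ G.strictDualSet l := by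
  set ν := (l + 1) / (θ + 1)
  have hν : 1 < ν := by rw [one_lt_div (by linarith)]; linarith
  have hνθ : ν * θ = l + 1 - ν := by
    have : ν * (θ + 1) = l + 1 := div_mul_cancel₀ _ (by linarith)
    linarith
  intro v w _
  by_cases hvw : v = w
  · subst hvw
    simp only [Matrix.smul_apply, Matrix.sub_apply, one_apply_eq, of_apply, Pi.one_apply,
      smul_eq_mul, mul_one, mul_sub, hνθ]
    linarith
  · simp only [Matrix.smul_apply, Matrix.sub_apply, one_apply_ne hvw, of_apply, Pi.one_apply,
      smul_eq_mul, mul_zero, zero_sub, mul_neg, mul_one]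
    linarith

variable [Fintype V] {l : ℝ} {F N₀ : Matrix V V ℝ}

lemma apply_nonneg_of_sum_mul_neg_on_strictDualSet
    (hF : ∀ N ∈ G.strictDualSet l, ∑ v, ∑ w, N v w * F v w < 0) (hN₀ : N₀ ∈ G.strictDualSet l)
    (v w : V) : 0 ≤ F v w := by
  have := mul_apply_nonpos_of_forall_add_single_mem hF (N := N₀) (v := v) (w := w) (r := -1)
    fun c hc => mem_strictDualSet_of_le hN₀ fun a b _ => ?_
  · linarith
  · simp only [Matrix.add_apply, single_apply]
    split_ifs <;> linarith

lemma apply_eq_zero_of_sum_mul_neg_on_strictDualSet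
    (hF : ∀ N ∈ G.strictDualSet l, ∑ v, ∑ w, N v w * F v w < 0) (hN₀ : N₀ ∈ G.strictDualSet l)
    {v w : V} (h : G.Adj v w) : F v w = 0 := by
  have := mul_apply_nonpos_of_forall_add_single_mem hF (N := N₀) (v := v) (w := w) (r := 1)
    fun c hc => mem_strictDualSet_of_le hN₀ fun a b hab => ?_
  · linarith [apply_nonneg_of_sum_mul_neg_on_strictDualSet hF hN₀ v w]
  · simp only [Matrix.add_apply, single_apply]
    split_ifs with heq
    · obtain ⟨rfl, rfl⟩ := heq
      exact absurd h hab
    · simp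

end StrictDual

section StrongProduct

variable {Z : Matrix V V ℝ} {B : Matrix (V × W) (V × W) ℝ}

lemma mul_apply_nonpos_of_strongProd (hZ : ∀ v v', v ≠ v' → ¬G.Adj v v' → Z v v' ≤ 0)
    (hB : ∀ p q, 0 ≤ B p q) (hBadj : ∀ p q, (G.strongProd H).Adj p q → B p q = 0)
    {v v' : V} {w w' : W} (hne : (v, w) ≠ (v', w')) (hw : w = w' ∨ H.Adj w w') :
    Z v v' * B (v, w) (v', w') ≤ 0 := by
  by_cases hv : v = v' ∨ G.Adj v v'
  · rw [hBadj _ _ ⟨hne, hv, hw⟩, mul_zero]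
  · obtain ⟨hvv, hG⟩ := not_or.mp hv
    exact mul_nonpos_of_nonpos_of_nonneg (hZ v v' hvv hG) (hB _ _)

variable [Fintype V]

lemma contractLeft_apply_nonpos_of_adj (hZ : ∀ v v', v ≠ v' → ¬G.Adj v v' → Z v v' ≤ 0)
    (hB : ∀ p q, 0 ≤ B p q) (hBadj : ∀ p q, (G.strongProd H).Adj p q → B p q = 0)
    {w w' : W} (h : H.Adj w w') : contractLeft Z B w w' ≤ 0 :=
  sum_nonpos fun _ _ => sum_nonpos fun _ _ =>
    mul_apply_nonpos_of_strongProd hZ hB hBadj (fun he => H.ne_of_adj h (congrArg Prod.snd he))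
      (Or.inr h)

lemma trace_contractLeft_le [Fintype W] {l : ℝ} (hdiag : ∀ v, Z v v ≤ l)
    (hZ : ∀ v v', v ≠ v' → ¬G.Adj v v' → Z v v' ≤ 0)
    (hB : ∀ p q, 0 ≤ B p q) (hBadj : ∀ p q, (G.strongProd H).Adj p q → B p q = 0)
    (htr : B.trace = 1) : (contractLeft Z B).trace ≤ l := by
  classical
  have hterm : ∀ w v v',
      Z v v' * B (v, w) (v', w) ≤ if v = v' then l * B (v, w) (v, w) else 0 := by
    intro w v v'
    split_ifs with hv
    · subst hv
      exact mul_le_mul_of_nonneg_right (hdiag v) (hB _ _)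
    · exact mul_apply_nonpos_of_strongProd hZ hB hBadj (fun he => hv (congrArg Prod.fst he))
        (Or.inl rfl)
  calc (contractLeft Z B).trace
      ≤ ∑ w, ∑ v, ∑ v', if v = v' then l * B (v, w) (v, w) else 0 :=
        sum_le_sum fun w _ => sum_le_sum fun v _ => sum_le_sum fun v' _ => hterm w v v'
    _ = l * B.trace := by
        simp only [sum_ite_eq, mem_univ, if_true]
        rw [trace, Fintype.sum_prod_type, sum_comm, mul_sum]
        simp only [diag_apply, mul_sum]
    _ = l := by rw [htr, mul_one]

end StrongProduct

variable [Fintype V]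

variable (G) in
lemma thetaMinus_eq_sdpSup :
    G.thetaMinus = sdpSup fun B => (∀ v w, 0 ≤ B v w) ∧ ∀ v w, G.Adj v w → B v w = 0 := by
  simp only [thetaMinus, sdpSup, and_assoc]

variable (G) in
lemma thetaMinus_nonneg : 0 ≤ G.thetaMinus := G.thetaMinus_eq_sdpSup ▸ sdpSup_nonneg

variable (H) in
lemma thetaPlus_nonneg [Fintype W] : 0 ≤ H.thetaPlus :=
  sdpSup_nonneg (P := fun B => ∀ v w, H.Adj v w → B v w ≤ 0)

lemma sum_le_thetaMinus_mul_trace {B : Matrix V V ℝ} (hB : B.PosSemidef)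
    (hnn : ∀ v w, 0 ≤ B v w) (hadj : ∀ v w, G.Adj v w → B v w = 0) :
    ∑ v, ∑ w, B v w ≤ G.thetaMinus * B.trace := by
  rw [thetaMinus_eq_sdpSup]
  refine sum_le_sdpSup_mul_trace (fun c hc B ⟨hnn, hadj⟩ => ⟨fun v w => ?_, fun v w h => ?_⟩)
    hB ⟨hnn, hadj⟩
  · simpa using mul_nonneg hc.le (hnn v w)
  · simp [hadj v w h]

lemma sum_le_thetaPlus_mul_trace [Fintype W] {A : Matrix W W ℝ} (hA : A.PosSemidef)
    (hadj : ∀ w w', H.Adj w w' → A w w' ≤ 0) :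
    ∑ w, ∑ w', A w w' ≤ H.thetaPlus * A.trace :=
  sum_le_sdpSup_mul_trace (fun c hc A hA w w' h => by
    simpa using mul_nonpos_of_nonneg_of_nonpos hc.le (hA w w' h)) hA hadj

theorem exists_thetaMinus_dual {l : ℝ} (hl : G.thetaMinus < l) :
    ∃ Z : Matrix V V ℝ, (Z - of 1).PosSemidef ∧ (∀ v, Z v v ≤ l) ∧
      ∀ v w, v ≠ w → ¬G.Adj v w → Z v w ≤ 0 := by
  classical
  suffices ∃ N ∈ G.strictDualSet l, N.PosSemidef by
    obtain ⟨N, hN, hpsd⟩ := this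
    refine ⟨N + of 1, by simpa using hpsd, fun v => ?_, fun v w hvw hadj => ?_⟩
    · have := hN v v (G.loopless.irrefl v)
      simp only [Matrix.add_apply, Matrix.sub_apply, Matrix.smul_apply, one_apply_eq, of_apply,
        Pi.one_apply, smul_eq_mul, mul_one] at this ⊢
      linarith
    · have := hN v w hadj
      simp only [Matrix.add_apply, Matrix.sub_apply, Matrix.smul_apply, one_apply_ne hvw, of_apply,
        Pi.one_apply, smul_eq_mul, mul_zero] at this ⊢
      linarith
  by_contra! hdisj
  obtain ⟨F, hFs, hFpsd⟩ := exists_sum_mul_neg_of_disjoint_posSemidef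
    (G.convex_strictDualSet l) (G.isOpen_strictDualSet l) hdisj
  set θ := G.thetaMinus
  have hθ := G.thetaMinus_nonneg
  -- The separating functional is negative at this strictly dual feasible point, i.e.
  -- `θ * tr F < ∑ F`, against the primal bound for `F + Fᵀ`.
  have hN₀ := G.smul_sub_mem_strictDualSet (by linarith : -1 < θ) hl
  have hν : 0 < (l + 1) / (θ + 1) := div_pos (by linarith) (by linarith)
  have hval := hFs _ hN₀
  simp only [Matrix.smul_apply, Matrix.sub_apply, one_apply, of_apply, Pi.one_apply, smul_eq_mul,
    mul_ite, mul_one, mul_zero, mul_sub, sub_mul, ite_mul, zero_mul, sum_sub_distrib, sum_ite_eq,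
    mem_univ, if_true, ← mul_sum] at hval
  have hsum := G.sum_le_thetaMinus_mul_trace (posSemidef_add_transpose_of_sum_mul_nonneg hFpsd)
    (fun v w => add_nonneg (apply_nonneg_of_sum_mul_neg_on_strictDualSet hFs hN₀ v w)
      (apply_nonneg_of_sum_mul_neg_on_strictDualSet hFs hN₀ w v))
    (fun v w h => by
      simp [apply_eq_zero_of_sum_mul_neg_on_strictDualSet hFs hN₀ h,
        apply_eq_zero_of_sum_mul_neg_on_strictDualSet hFs hN₀ h.symm])
  have hFT : ∑ v, ∑ w, F w v = ∑ v, ∑ w, F v w := sum_comm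
  have htr : F.trace = ∑ v, F v v := rfl
  simp only [Matrix.add_apply, transpose_apply, sum_add_distrib, hFT, trace_add, trace_transpose,
    htr] at hsum
  nlinarith

theorem thetaMinus_strongProd_le_mul_thetaPlus [Fintype W] {l : ℝ}
    (hl : G.thetaMinus < l) : (G.strongProd H).thetaMinus ≤ l * H.thetaPlus := by
  obtain ⟨Z, hZJ, hdiag, hoff⟩ := exists_thetaMinus_dual hl
  have hl0 : 0 ≤ l := G.thetaMinus_nonneg.trans hl.le
  rw [thetaMinus_eq_sdpSup]
  refine sdpSup_le (mul_nonneg hl0 (H.thetaPlus_nonneg)) fun B hB htr ⟨hnn, hadj⟩ => ?_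
  have hZ : Z.PosSemidef := by simpa using posSemidef_of_one.add hZJ
  calc ∑ p, ∑ q, B p q
      ≤ ∑ w, ∑ w', contractLeft Z B w w' := sum_le_sum_contractLeft hZJ hB
    _ ≤ H.thetaPlus * (contractLeft Z B).trace :=
        sum_le_thetaPlus_mul_trace (hZ.contractLeft hB)
          fun _ _ => contractLeft_apply_nonpos_of_adj hoff hnn hadj
    _ ≤ H.thetaPlus * l :=
        mul_le_mul_of_nonneg_left (trace_contractLeft_le hdiag hoff hnn hadj htr)
          H.thetaPlus_nonneg
    _ = l * H.thetaPlus := mul_comm _ _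

end SimpleGraph

theorem thetaMinus_strongProd_le {V W : Type*} [Fintype V] [Fintype W]
    (G : SimpleGraph V) (H : SimpleGraph W) :
    (G.strongProd H).thetaMinus ≤ G.thetaMinus * H.thetaPlus :=
  le_mul_of_forall_lt_imp_le_mul fun _ hl => thetaMinus_strongProd_le_mul_thetaPlus hl
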